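/- Let H be a Hilbert space, b ∈ B(H), and set b⁺ = b, b⁻ = −b*. Assume b⁺ − b⁻ = b + b* is invertible and positive, so that its square roots (b⁺−b⁻)^{±1/2} are defined. Define T = i⁻¹ [[1, −1],[b⁺, −b⁻]] (b⁺−b⁻)^{−1/2} acting on H ⊕ H, and let q = [[0,1],[1,0]], q^ad = [[1,0],[0,−1]]. Then T* q T = q^ad. -/
import Mathlib


open ContinuousLinearMap

/-- The 2×2 block operator matrix `[[A,B],[C,D]]` acting on `H × H` by
`(u,v) ↦ (Au + Bv, Cu + Dv)`. -/
noncomputable def blk {H : Type*} [NormedAddCommGroup H] [NormedSpace ℂ H]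
    (A B C D : H →L[ℂ] H) : (H × H) →L[ℂ] (H × H) :=
  (A.comp (fst ℂ H H) + B.comp (snd ℂ H H)).prod
    (C.comp (fst ℂ H H) + D.comp (snd ℂ H H))

/-- let `b⁺ = b`, `b⁻ = −b*`, assume `b⁺ − b⁻ = b + b*` is positive and
invertible with (functional-calculus) square root inverse `e = (b+b*)^{−1/2}`
(`e` self-adjoint, positive, commuting with `b + b*`, with `e² (b+b*) = (b+b*) e² = 1`).
With `T = i⁻¹ [[1,−1],[b⁺,−b⁻]] e` (entries multiplied by `e` on the right),
`q = [[0,1],[1,0]]` and `q^ad = [[1,0],[0,−1]]`, one has `T* q T = q^ad`.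
Here `T*`, the adjoint of `T` on the direct sum, is written out entrywise:
`T* = conj(i⁻¹) [[e*, (b⁺e)*],[(−e)*, (−b⁻e)*]] = i [[e*, e*b*],[−e*, e*b]]`. -/
theorem T_star_q_T_eq_qad
    {H : Type*} [NormedAddCommGroup H] [InnerProductSpace ℂ H] [CompleteSpace H]
    (b e : H →L[ℂ] H)
    (hesa : IsSelfAdjoint e) (hepos : e.IsPositive)
    (hspos : (b + ContinuousLinearMap.adjoint b).IsPositive)
    (hcomm : e.comp (b + ContinuousLinearMap.adjoint b)
        = (b + ContinuousLinearMap.adjoint b).comp e)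
    (hinv1 : (e.comp e).comp (b + ContinuousLinearMap.adjoint b) = 1)
    (hinv2 : (b + ContinuousLinearMap.adjoint b).comp (e.comp e) = 1) :
    ((Complex.I • blk (ContinuousLinearMap.adjoint e)
          ((ContinuousLinearMap.adjoint e).comp (ContinuousLinearMap.adjoint b))
          (-(ContinuousLinearMap.adjoint e))
          ((ContinuousLinearMap.adjoint e).comp b)).comp
        ((blk (0 : H →L[ℂ] H) 1 1 0).comp
          ((-Complex.I) • blk e (-e) (b.comp e)
            ((ContinuousLinearMap.adjoint b).comp e))))
      = blk 1 0 0 (-1) := by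
  have he : ContinuousLinearMap.adjoint e = e := by
    rw [← ContinuousLinearMap.star_eq_adjoint]; exact hesa
  have h : e.comp ((b + ContinuousLinearMap.adjoint b).comp e) = 1 := by
    rw [← hcomm, ← ContinuousLinearMap.comp_assoc, hinv1]
  have key : ∀ x : H, e (b (e x)) + e ((ContinuousLinearMap.adjoint b) (e x)) = x := by
    intro x
    have := ContinuousLinearMap.ext_iff.mp h x
    simpa [ContinuousLinearMap.comp_apply, map_add] using this
  ext x <;>
    simp [blk, he, smul_smul, key, ← neg_add, add_comm]
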